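/- arXiv:1301.3017 — 2 statements merged into one kernel-verified Lean document; each statement's English description precedes it below -/
import Mathlib

section
/- Let (λ_j)_{j≥2} be a positive sequence such that j λ_j ln^{1+γ}(j) is decreasing for some γ > 0. Then there exists a constant C(γ) such that for all k ≥ 2, the quantity a_k := Σ_{i≠k} λ_i/|λ_i - λ_k| + λ_k/δ_k satisfies a_k ≤ C(γ) k ln k, where δ_k := min(λ_k - λ_{k+1}, λ_{k-1} - λ_k)/2 (suitably interpreted for k = 1). -/
/-!
Write `g = logWeight (1 + γ)`, i.e. `g j = j log^{1+γ} j`. Assumption H4 says that `λ_j g(j)`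
is nonincreasing, which bounds each ratio `λ_i / |λ_i - λ_k|` (`i, k ≥ 2`) by
`g(k) / |g(i) - g(k)|`. As `g(j) - g(i) ≥ (j - i) log^{1+γ} j`, this is at most `k / |i - k|`,
and these sum to `2 k H_k = O(k log k)` over `i ≤ 2k`. For `i > 2k` the ratio is at most
`2 g(k) / g(i)`, and `∑_{i > k} 1 / g(i) ≤ log^{-γ} k / γ` telescopes by convexity of
`x ↦ x^{-γ}`. The term `i = 1` is a constant, and `λ_k / δ_k` is controlled by the ratios at
`i = k ± 1`.
-/

open Real Finset

theorem one_add_mul_one_sub_le_rpow_neg {t γ : ℝ} (ht : 0 < t) (hγ : 0 ≤ γ) :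
    1 + γ * (1 - t) ≤ t ^ (-γ) := by
  calc 1 + γ * (1 - t) ≤ 1 + γ * -log t := by gcongr; linarith [log_le_sub_one_of_pos ht]
    _ ≤ exp (log t * -γ) := by linarith [add_one_le_exp (log t * -γ)]
    _ = t ^ (-γ) := (rpow_def_of_pos ht _).symm

theorem mul_sub_div_rpow_le_rpow_neg_sub {a b γ : ℝ} (ha : 0 < a) (hb : 0 < b) (hγ : 0 ≤ γ) :
    γ * (a - b) / a ^ (1 + γ) ≤ b ^ (-γ) - a ^ (-γ) := by
  have key := one_add_mul_one_sub_le_rpow_neg (div_pos hb ha) hγ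
  rw [div_rpow hb.le ha.le, le_div_iff₀ (rpow_pos_of_pos ha _)] at key
  rw [rpow_one_add' ha.le (by positivity)]
  calc γ * (a - b) / (a * a ^ γ) = (1 + γ * (1 - b / a)) * (a ^ (-γ)) - a ^ (-γ) := by
        rw [rpow_neg ha.le]; field_simp; ring
    _ ≤ b ^ (-γ) - a ^ (-γ) := by linarith

theorem inv_natCast_succ_le_log_sub {j : ℕ} (hj : 1 ≤ j) :
    ((j : ℝ) + 1)⁻¹ ≤ log (j + 1) - log j := by
  have hj0 : (0 : ℝ) < j := by exact_mod_cast hj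
  have h := one_sub_inv_le_log_of_pos (x := ((j : ℝ) + 1) / j) (by positivity)
  rw [log_div (by positivity) hj0.ne', inv_div] at h
  calc ((j : ℝ) + 1)⁻¹ = 1 - j / (j + 1) := by field_simp; ring
    _ ≤ _ := h

theorem sum_le_of_le_sub_succ {f c : ℕ → ℝ} {m : ℕ} (hf : ∀ i, m < i → 0 ≤ f i)
    (hc : ∀ i, m ≤ i → 0 ≤ c i) (hfc : ∀ i, m ≤ i → f (i + 1) ≤ c i - c (i + 1))
    {s : Finset ℕ} (hs : ∀ i ∈ s, m < i) : ∑ i ∈ s, f i ≤ c m := by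
  have htel : ∀ N, m ≤ N → ∑ i ∈ Ioc m N, f i ≤ c m - c N := by
    intro N hN
    induction N, hN using Nat.le_induction with
    | base => simp
    | succ N hN ih =>
      rw [sum_Ioc_succ_top hN]
      linarith [hfc N hN]
  set N := max m (s.sup id)
  calc ∑ i ∈ s, f i ≤ ∑ i ∈ Ioc m N, f i := by
        refine sum_le_sum_of_subset_of_nonneg (fun i hi => mem_Ioc.2 ⟨hs i hi, ?_⟩)
          (fun i hi _ => hf i (mem_Ioc.1 hi).1)
        exact (le_sup (f := id) hi).trans (le_max_right _ _)
    _ ≤ c m - c N := htel N (le_max_left _ _)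
    _ ≤ c m := by linarith [hc N (le_max_left _ _)]

noncomputable def logWeight (p : ℝ) (j : ℕ) : ℝ := j * log j ^ p

section logWeight

variable {p : ℝ} {i j : ℕ}

theorem log_natCast_pos (hj : 2 ≤ j) : 0 < log j :=
  log_pos (by exact_mod_cast hj)

theorem log_rpow_le_log_rpow (hp : 0 ≤ p) (hi : 1 ≤ i) (hij : i ≤ j) :
    log i ^ p ≤ log j ^ p :=
  rpow_le_rpow (log_nonneg (by exact_mod_cast hi))
    (log_le_log (by positivity) (by exact_mod_cast hij)) hp

theorem logWeight_pos (hj : 2 ≤ j) : 0 < logWeight p j := by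
  have := log_natCast_pos hj
  unfold logWeight
  positivity

theorem sub_mul_le_logWeight_sub (hp : 0 ≤ p) (hi : 1 ≤ i) (hij : i ≤ j) :
    ((j : ℝ) - i) * log j ^ p ≤ logWeight p j - logWeight p i := by
  have := log_rpow_le_log_rpow hp hi hij
  unfold logWeight
  nlinarith [(Nat.cast_nonneg i : (0 : ℝ) ≤ i)]

theorem logWeight_lt_logWeight (hp : 0 ≤ p) (hi : 2 ≤ i) (hij : i < j) :
    logWeight p i < logWeight p j := by
  have := sub_mul_le_logWeight_sub hp (by omega : 1 ≤ i) hij.le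
  have : 0 < ((j : ℝ) - i) * log j ^ p :=
    mul_pos (by simp [hij]) (rpow_pos_of_pos (log_natCast_pos (by omega)) _)
  linarith

theorem two_mul_logWeight_le (hp : 0 ≤ p) (hi : 1 ≤ i) (hij : 2 * i ≤ j) :
    2 * logWeight p i ≤ logWeight p j := by
  have := log_rpow_le_log_rpow hp hi (by omega : i ≤ j)
  have : (2 * i : ℝ) ≤ j := by exact_mod_cast hij
  unfold logWeight
  nlinarith [rpow_nonneg (log_nonneg (by exact_mod_cast hi : (1 : ℝ) ≤ i)) p]

theorem inv_logWeight_succ_le {γ : ℝ} (hγ : 0 < γ) (hj : 2 ≤ j) :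
    (logWeight (1 + γ) (j + 1))⁻¹ ≤ log j ^ (-γ) / γ - log (j + 1 : ℕ) ^ (-γ) / γ := by
  have hb := log_natCast_pos hj
  have ha := log_natCast_pos (by omega : 2 ≤ j + 1)
  have hgap := inv_natCast_succ_le_log_sub (by omega : 1 ≤ j)
  have key := mul_sub_div_rpow_le_rpow_neg_sub ha hb hγ.le
  push_cast at *
  rw [← sub_div, le_div_iff₀ hγ, logWeight]
  push_cast
  calc ((j + 1 : ℝ) * log (j + 1) ^ (1 + γ))⁻¹ * γ
        = γ * ((j : ℝ) + 1)⁻¹ / log (j + 1) ^ (1 + γ) := by field_simp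
    _ ≤ γ * (log (j + 1) - log j) / log (j + 1) ^ (1 + γ) := by gcongr
    _ ≤ _ := key

theorem sum_inv_logWeight_le {γ : ℝ} (hγ : 0 < γ) {m : ℕ} (hm : 2 ≤ m) {s : Finset ℕ}
    (hs : ∀ i ∈ s, m < i) : ∑ i ∈ s, (logWeight (1 + γ) i)⁻¹ ≤ log m ^ (-γ) / γ :=
  sum_le_of_le_sub_succ (f := fun i => (logWeight (1 + γ) i)⁻¹)
    (c := fun i => log i ^ (-γ) / γ)
    (fun i hi => inv_nonneg.2 (logWeight_pos (by omega)).le)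
    (fun i hi => div_nonneg (rpow_nonneg (log_natCast_pos (by omega)).le _) hγ.le)
    (fun i hi => inv_logWeight_succ_le hγ (by omega)) hs

end logWeight

theorem sum_range_inv_abs_sub_eq (k : ℕ) :
    ∑ i ∈ range (2 * k + 1), |(i : ℝ) - k|⁻¹ = 2 * harmonic k := by
  have hharm : (harmonic k : ℝ) = ∑ i ∈ range k, ((i : ℝ) + 1)⁻¹ := by simp [harmonic]
  rw [show 2 * k + 1 = k + (k + 1) by ring, sum_range_add, sum_range_succ', ← sum_range_reflect,
    hharm]
  have hlow : ∀ j ∈ range k, |((k - 1 - j : ℕ) : ℝ) - k|⁻¹ = ((j : ℝ) + 1)⁻¹ := by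
    intro j hj
    rw [Nat.cast_sub (by simp at hj; omega), Nat.cast_sub (by simp at hj; omega), Nat.cast_one,
      show ((k : ℝ) - 1 - j - k) = -(j + 1) by ring, abs_neg, abs_of_pos (by positivity)]
  rw [sum_congr rfl hlow]
  have habs (x : ℕ) : |(x : ℝ) + 1| = x + 1 := abs_of_pos (Nat.cast_add_one_pos x)
  simp only [Nat.cast_add, add_sub_cancel_left, add_zero, sub_self, abs_zero, inv_zero,
    Nat.cast_one, habs]
  ring

theorem div_sub_le_div_sub_of_mul_le {x y p q : ℝ} (hyx : y < x) (hpq : p < q)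
    (h : y * q ≤ x * p) : y / (x - y) ≤ p / (q - p) := by
  rw [div_le_div_iff₀ (sub_pos.2 hyx) (sub_pos.2 hpq)]
  linarith

theorem div_sub_le_div_sub_of_mul_le' {x y p q : ℝ} (hyx : y < x) (hpq : p < q)
    (h : y * q ≤ x * p) : x / (x - y) ≤ q / (q - p) := by
  rw [div_le_div_iff₀ (sub_pos.2 hyx) (sub_pos.2 hpq)]
  linarith

theorem div_min_le_div_add_div {x a b : ℝ} (hx : 0 ≤ x) (ha : 0 < a) (hb : 0 < b) :
    x / min a b ≤ x / a + x / b := by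
  rcases min_cases a b with ⟨h, -⟩ | ⟨h, -⟩ <;> rw [h]
  · linarith [div_nonneg hx hb.le]
  · linarith [div_nonneg hx ha.le]

section H4

variable {lam : ℕ → ℝ} {p γ : ℝ} {i k : ℕ}

theorem div_sub_le_div_sub_of_lt (hdec : StrictAntiOn lam (Set.Ici 2))
    (hH4 : AntitoneOn (fun j => lam j * logWeight p j) (Set.Ici 2)) (hp : 0 ≤ p)
    (hi : 2 ≤ i) (hik : i < k) : lam i / (lam i - lam k) ≤ k / (k - i) := by
  have hLk : 0 < log k ^ p := rpow_pos_of_pos (log_natCast_pos (by omega)) p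
  have hki : (0 : ℝ) < k - i := by simp [hik]
  calc lam i / (lam i - lam k) ≤ logWeight p k / (logWeight p k - logWeight p i) :=
        div_sub_le_div_sub_of_mul_le' (hdec hi (hi.trans hik.le) hik)
          (logWeight_lt_logWeight hp hi hik) (hH4 hi (hi.trans hik.le) hik.le)
    _ ≤ logWeight p k / ((k - i) * log k ^ p) :=
        div_le_div_of_nonneg_left (logWeight_pos (by omega)).le (by positivity)
          (sub_mul_le_logWeight_sub hp (by omega) hik.le)
    _ = k / (k - i) := by rw [logWeight, mul_div_mul_right _ _ hLk.ne']

theorem div_sub_le_logWeight_div (hdec : StrictAntiOn lam (Set.Ici 2))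
    (hH4 : AntitoneOn (fun j => lam j * logWeight p j) (Set.Ici 2)) (hp : 0 ≤ p)
    (hk : 2 ≤ k) (hki : k < i) :
    lam i / (lam k - lam i) ≤ logWeight p k / (logWeight p i - logWeight p k) :=
  div_sub_le_div_sub_of_mul_le (hdec hk (hk.trans hki.le) hki)
    (logWeight_lt_logWeight hp hk hki) (hH4 hk (hk.trans hki.le) hki.le)

theorem div_sub_le_div_sub_of_gt (hdec : StrictAntiOn lam (Set.Ici 2))
    (hH4 : AntitoneOn (fun j => lam j * logWeight p j) (Set.Ici 2)) (hp : 0 ≤ p)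
    (hk : 2 ≤ k) (hki : k < i) : lam i / (lam k - lam i) ≤ k / (i - k) := by
  have hLk : 0 < log k ^ p := rpow_pos_of_pos (log_natCast_pos hk) p
  have hik : (0 : ℝ) < i - k := by simp [hki]
  calc lam i / (lam k - lam i) ≤ logWeight p k / (logWeight p i - logWeight p k) :=
        div_sub_le_logWeight_div hdec hH4 hp hk hki
    _ ≤ logWeight p k / ((i - k) * log k ^ p) := by
        refine div_le_div_of_nonneg_left (logWeight_pos hk).le (by positivity) ?_
        calc ((i : ℝ) - k) * log k ^ p ≤ (i - k) * log i ^ p := by gcongr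
          _ ≤ _ := sub_mul_le_logWeight_sub hp (by omega) hki.le
    _ = k / (i - k) := by rw [logWeight, mul_div_mul_right _ _ hLk.ne']

theorem div_abs_sub_le (hdec : StrictAntiOn lam (Set.Ici 2))
    (hH4 : AntitoneOn (fun j => lam j * logWeight p j) (Set.Ici 2)) (hp : 0 ≤ p)
    (hi : 2 ≤ i) (hk : 2 ≤ k) : lam i / |lam i - lam k| ≤ k / |(i : ℝ) - k| := by
  rcases lt_trichotomy i k with hik | rfl | hki
  · rw [abs_of_pos (sub_pos.2 (hdec hi hk hik)), abs_of_neg (by simp [hik]), neg_sub]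
    exact div_sub_le_div_sub_of_lt hdec hH4 hp hi hik
  · simp -- both sides are `_ / 0 = 0`
  · rw [abs_of_neg (sub_neg.2 (hdec hk hi hki)), abs_of_pos (by simp [hki]), neg_sub]
    exact div_sub_le_div_sub_of_gt hdec hH4 hp hk hki

theorem div_abs_sub_le_add (h1 : 0 ≤ lam 1) (hdec : StrictAntiOn lam (Set.Ici 1))
    (hH4 : AntitoneOn (fun j => lam j * logWeight p j) (Set.Ici 2)) (hp : 0 ≤ p)
    (hi : 1 ≤ i) (hk : 2 ≤ k) :
    lam i / |lam i - lam k| ≤ lam 1 / (lam 1 - lam 2) + k / |(i : ℝ) - k| := by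
  have h12 : lam 2 < lam 1 := hdec Set.self_mem_Ici (by norm_num) one_lt_two
  rcases hi.eq_or_lt with rfl | hi
  · have h1k : lam k ≤ lam 2 :=
      hdec.antitoneOn (Set.mem_Ici.2 one_le_two) (Set.mem_Ici.2 (by omega)) hk
    rw [abs_of_pos (sub_pos.2 (hdec Set.self_mem_Ici (Set.mem_Ici.2 (by omega)) (by omega)))]
    have := div_le_div_of_nonneg_left h1 (sub_pos.2 h12)
      (by linarith : lam 1 - lam 2 ≤ lam 1 - lam k)
    linarith [div_nonneg (Nat.cast_nonneg k) (abs_nonneg ((1 : ℕ) - k : ℝ))]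
  · have := div_abs_sub_le (hdec.mono (Set.Ici_subset_Ici.2 one_le_two)) hH4 hp hi hk
    linarith [div_nonneg h1 (sub_pos.2 h12).le]

theorem div_abs_sub_le_two_mul (hdec : StrictAntiOn lam (Set.Ici 2))
    (hH4 : AntitoneOn (fun j => lam j * logWeight p j) (Set.Ici 2)) (hp : 0 ≤ p)
    (hk : 2 ≤ k) (hki : 2 * k < i) :
    lam i / |lam i - lam k| ≤ 2 * logWeight p k * (logWeight p i)⁻¹ := by
  have hgk := logWeight_pos (p := p) hk
  have hgi := two_mul_logWeight_le hp (by omega) hki.le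
  rw [abs_of_neg (sub_neg.2 (hdec hk (Set.mem_Ici.2 (by omega)) (by omega))), neg_sub]
  calc lam i / (lam k - lam i) ≤ logWeight p k / (logWeight p i - logWeight p k) :=
        div_sub_le_logWeight_div hdec hH4 hp hk (by omega)
    _ ≤ logWeight p k / (logWeight p i / 2) :=
        div_le_div_of_nonneg_left hgk.le (by linarith) (by linarith)
    _ = 2 * logWeight p k * (logWeight p i)⁻¹ := by field_simp

theorem sum_filter_le_two_mul_le (h1 : 0 ≤ lam 1) (hdec : StrictAntiOn lam (Set.Ici 1))
    (hH4 : AntitoneOn (fun j => lam j * logWeight p j) (Set.Ici 2)) (hp : 0 ≤ p) (hk : 2 ≤ k)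
    {s : Finset ℕ} (hs : ∀ i ∈ s, 1 ≤ i) :
    ∑ i ∈ s with i ≤ 2 * k, lam i / |lam i - lam k|
      ≤ (2 * k + 1) * (lam 1 / (lam 1 - lam 2)) + 2 * k * (1 + log k) := by
  set A := lam 1 / (lam 1 - lam 2)
  have hA : 0 ≤ A := div_nonneg h1 (sub_pos.2 (hdec Set.self_mem_Ici (by norm_num) one_lt_two)).le
  calc ∑ i ∈ s with i ≤ 2 * k, lam i / |lam i - lam k|
      ≤ ∑ i ∈ s with i ≤ 2 * k, (A + k * |(i : ℝ) - k|⁻¹) := by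
        refine sum_le_sum fun i hi => ?_
        rw [← div_eq_mul_inv]
        exact div_abs_sub_le_add h1 hdec hH4 hp (hs i (mem_filter.1 hi).1) hk
    _ ≤ ∑ i ∈ range (2 * k + 1), (A + k * |(i : ℝ) - k|⁻¹) :=
        sum_le_sum_of_subset_of_nonneg (fun i hi => mem_range.2 (by simp at hi; omega))
          (fun _ _ _ => by positivity)
    _ = (2 * k + 1) * A + k * (2 * harmonic k) := by
        rw [sum_add_distrib, ← mul_sum, sum_range_inv_abs_sub_eq]
        simp
    _ ≤ (2 * k + 1) * A + 2 * k * (1 + log k) := by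
        have := harmonic_le_one_add_log k
        nlinarith [(Nat.cast_nonneg k : (0 : ℝ) ≤ k)]

theorem sum_filter_two_mul_lt_le (hdec : StrictAntiOn lam (Set.Ici 2))
    (hH4 : AntitoneOn (fun j => lam j * logWeight (1 + γ) j) (Set.Ici 2)) (hγ : 0 < γ)
    (hk : 2 ≤ k) (s : Finset ℕ) :
    ∑ i ∈ s with 2 * k < i, lam i / |lam i - lam k| ≤ 2 * k * log k / γ := by
  have hlog := log_natCast_pos hk
  calc ∑ i ∈ s with 2 * k < i, lam i / |lam i - lam k|
      ≤ ∑ i ∈ s with 2 * k < i, 2 * logWeight (1 + γ) k * (logWeight (1 + γ) i)⁻¹ :=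
        sum_le_sum fun i hi =>
          div_abs_sub_le_two_mul hdec hH4 (by linarith) hk (mem_filter.1 hi).2
    _ = 2 * logWeight (1 + γ) k * ∑ i ∈ s with 2 * k < i, (logWeight (1 + γ) i)⁻¹ := by
        rw [mul_sum]
    _ ≤ 2 * logWeight (1 + γ) k * (log k ^ (-γ) / γ) := by
        have := logWeight_pos (p := 1 + γ) hk
        gcongr
        exact sum_inv_logWeight_le hγ hk fun i hi => by simp at hi; omega
    _ = 2 * k * log k / γ := by
        rw [logWeight, mul_assoc, mul_assoc, ← mul_div_assoc, ← rpow_add hlog,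
          add_neg_cancel_right, rpow_one]
        ring

theorem tsum_div_abs_sub_le (h1 : 0 ≤ lam 1) (hdec : StrictAntiOn lam (Set.Ici 1))
    (hH4 : AntitoneOn (fun j => lam j * logWeight (1 + γ) j) (Set.Ici 2)) (hγ : 0 < γ)
    (hk : 2 ≤ k) :
    ∑' i : {i : ℕ // 1 ≤ i ∧ i ≠ k}, lam i / |lam i - lam k|
      ≤ (2 * k + 1) * (lam 1 / (lam 1 - lam 2)) + 2 * k * (1 + log k) + 2 * k * log k / γ := by
  have hA : 0 ≤ lam 1 / (lam 1 - lam 2) :=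
    div_nonneg h1 (sub_pos.2 (hdec Set.self_mem_Ici (by norm_num) one_lt_two)).le
  have hlog := log_natCast_pos hk
  -- `tsum_le_of_sum_le'` needs no summability: a divergent `tsum` is `0`
  refine tsum_le_of_sum_le' (by positivity) fun s => ?_
  set t := s.map (Function.Embedding.subtype _)
  have hst : ∑ i ∈ s, lam i / |lam i - lam k| = ∑ i ∈ t, lam i / |lam i - lam k| :=
    (sum_map s (Function.Embedding.subtype _) fun i => lam i / |lam i - lam k|).symm
  rw [hst, ← sum_filter_add_sum_filter_not t (· ≤ 2 * k)]
  have hlow := sum_filter_le_two_mul_le h1 hdec hH4 (by linarith) hk (s := t)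
    (by simp +contextual [t])
  have hhigh := sum_filter_two_mul_lt_le (hdec.mono (Set.Ici_subset_Ici.2 one_le_two)) hH4 hγ hk t
  simp only [not_le]
  linarith

theorem div_half_min_gap_le (hnonneg : ∀ j, 1 ≤ j → 0 ≤ lam j)
    (hdec : StrictAntiOn lam (Set.Ici 1))
    (hH4 : AntitoneOn (fun j => lam j * logWeight p j) (Set.Ici 2)) (hp : 0 ≤ p) (hk : 2 ≤ k) :
    lam k / (min (lam k - lam (k + 1)) (lam (k - 1) - lam k) / 2)
      ≤ 4 * (lam 1 / (lam 1 - lam 2)) + 4 * k := by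
  have hnext : lam (k + 1) < lam k :=
    hdec (Set.mem_Ici.2 (by omega)) (Set.mem_Ici.2 (by omega)) (by omega)
  have hprev : lam k < lam (k - 1) :=
    hdec (Set.mem_Ici.2 (by omega)) (Set.mem_Ici.2 (by omega)) (by omega)
  have hbound (i : ℕ) (hi : 1 ≤ i) :=
    div_abs_sub_le_add (hnonneg 1 le_rfl) hdec hH4 hp hi hk
  have hright : lam k / (lam k - lam (k + 1)) ≤ 1 + lam 1 / (lam 1 - lam 2) + k := by
    have := hbound (k + 1) (by omega)
    rw [abs_of_neg (by linarith), neg_sub] at this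
    push_cast at this
    rw [add_sub_cancel_left, abs_one, div_one] at this
    rw [show lam k / (lam k - lam (k + 1)) = 1 + lam (k + 1) / (lam k - lam (k + 1)) by
      field_simp [(sub_pos.2 hnext).ne']; ring]
    linarith
  have hleft : lam k / (lam (k - 1) - lam k) ≤ lam 1 / (lam 1 - lam 2) + k - 1 := by
    have := hbound (k - 1) (by omega)
    rw [abs_of_pos (by linarith), Nat.cast_sub (by omega)] at this
    push_cast at this
    rw [show (k : ℝ) - 1 - k = -1 by ring, abs_neg, abs_one, div_one] at this
    rw [show lam k / (lam (k - 1) - lam k) = lam (k - 1) / (lam (k - 1) - lam k) - 1 by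
      field_simp [(sub_pos.2 hprev).ne']; ring]
    linarith
  calc lam k / (min (lam k - lam (k + 1)) (lam (k - 1) - lam k) / 2)
      = 2 * (lam k / min (lam k - lam (k + 1)) (lam (k - 1) - lam k)) := by
        rw [div_div_eq_mul_div]; ring
    _ ≤ 2 * (lam k / (lam k - lam (k + 1)) + lam k / (lam (k - 1) - lam k)) := by
        gcongr
        exact div_min_le_div_add_div (hnonneg k (by omega)) (by linarith) (by linarith)
    _ ≤ 4 * (lam 1 / (lam 1 - lam 2)) + 4 * k := by linarith

end H4

theorem ak_bound_general
    (γ : ℝ) (hγ : 0 < γ) (lam : ℕ → ℝ)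
    (hpos : ∀ j, 1 ≤ j → 0 < lam j)
    (hdec : ∀ j k : ℕ, 1 ≤ j → j < k → lam k < lam j)
    (hH4 : ∀ j k : ℕ, 2 ≤ j → j ≤ k →
      (k : ℝ) * lam k * (Real.log k) ^ (1 + γ) ≤ (j : ℝ) * lam j * (Real.log j) ^ (1 + γ)) :
    ∃ C : ℝ, 0 < C ∧ ∀ k, 2 ≤ k →
      (∑' i : {i : ℕ // 1 ≤ i ∧ i ≠ k}, lam i / |lam i - lam k|) +
        lam k / (min (lam k - lam (k + 1)) (lam (k - 1) - lam k) / 2)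
      ≤ C * (k : ℝ) * Real.log k := by
  have hnonneg j (hj : 1 ≤ j) : 0 ≤ lam j := (hpos j hj).le
  have hanti : StrictAntiOn lam (Set.Ici 1) := fun j hj k _ hjk => hdec j k hj hjk
  have hweight : AntitoneOn (fun j => lam j * logWeight (1 + γ) j) (Set.Ici 2) :=
    fun j hj k _ hjk => by simp only [logWeight]; linarith [hH4 j k hj hjk]
  set A := lam 1 / (lam 1 - lam 2)
  have hA : 0 ≤ A := div_nonneg (hnonneg 1 le_rfl) (sub_pos.2 (hdec 1 2 le_rfl one_lt_two)).le
  refine ⟨9 * A + 14 + 2 / γ, by positivity, fun k hk => ?_⟩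
  have hsum := tsum_div_abs_sub_le (hnonneg 1 le_rfl) hanti hweight hγ hk
  have hgap := div_half_min_gap_le hnonneg hanti hweight (by linarith) hk
  have hk2 : (2 : ℝ) ≤ k := by exact_mod_cast hk
  have hlog : 1 / 2 ≤ log k :=
    (log_two_gt_d9.le.trans' (by norm_num)).trans (log_le_log (by norm_num) hk2)
  have hklog : 1 ≤ k * log k := by nlinarith
  have hγk : 2 * k * log k / γ = 2 / γ * (k * log k) := by ring
  nlinarith [mul_nonneg hA (by linarith : (0 : ℝ) ≤ 2 * log k - 1)]

/-- Under Assumption H4 (`j λ_j ln^{1+γ} j` decreasing), the quantity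
`a_k = ∑_{i≠k} λ_i/|λ_i-λ_k| + λ_k/δ_k` satisfies `a_k ≤ C(γ) k ln k` for `k ≥ 2`,
where `δ_k = min(λ_k - λ_{k+1}, λ_{k-1} - λ_k)/2`. -/
theorem ak_bound
    (γ : ℝ) (hγ : 0 < γ) (lam : ℕ → ℝ)
    (hpos : ∀ j, 1 ≤ j → 0 < lam j)
    (hdec : ∀ j k : ℕ, 1 ≤ j → j < k → lam k < lam j)
    (hsum : Summable fun j : ℕ => lam (j + 1))
    (hH4 : ∀ j k : ℕ, 2 ≤ j → j ≤ k →
      (k : ℝ) * lam k * (Real.log k) ^ (1 + γ) ≤ (j : ℝ) * lam j * (Real.log j) ^ (1 + γ)) :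
    ∃ C : ℝ, 0 < C ∧ ∀ k, 2 ≤ k →
      (∑' i : {i : ℕ // 1 ≤ i ∧ i ≠ k}, lam i / |lam i - lam k|) +
        lam k / (min (lam k - lam (k + 1)) (lam (k - 1) - lam k) / 2)
      ≤ C * (k : ℝ) * Real.log k :=
  ak_bound_general γ hγ lam hpos hdec hH4
end

section
/- Let (λ_j) satisfy c_E^{-1}e^{-j^a} ≤ λ_j ≤ c_E e^{-j^a} for constants a > 0, c_E ≥ 1, and let β be in the ellipsoid W_r^R. Then choosing m_n* ≍ (ln n)^{1/a}, the sum of bias and variance terms satisfies Σ_{j>m_n*} λ_j⟨β,ψ_j⟩² + σ²m_n*/n ≤ C n^{-1}(ln n)^{1/a} for a constant C independent of n (and uniform over β ∈ W_r^R). -/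
/-!
Beyond the cut-off `m = ⌈(ln n)^{1/a}⌉₊` every eigenvalue satisfies
`λ_j ≤ c_E e^{-j^a} ≤ c_E / n`, and `j^r ≥ 1`, so the bias is at most `c_E R² / n`.
The variance is `σ² m / n` with `m ≤ (ln n)^{1/a} + 1`. Since `(ln n)^{1/a} ≥ κ := (ln 2)^{1/a} > 0`
for `n ≥ 2`, both `1` and `c_E R²` are absorbed into multiples of `(ln n)^{1/a}`.
-/

open Real

theorem tsum_subtype_le_tsum_of_le {β : Type*} {f g : β → ℝ} {s : Set β}
    (hfg : ∀ j ∈ s, f j ≤ g j) (hg : ∀ j, 0 ≤ g j) (hgs : Summable g) :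
    ∑' j : s, f j ≤ ∑' j, g j := by
  by_cases hf : Summable fun j : s => f j
  · calc ∑' j : s, f j ≤ ∑' j : s, g j := hf.tsum_le_tsum (fun j => hfg j.1 j.2) (hgs.subtype s)
      _ ≤ ∑' j, g j := hgs.tsum_subtype_le g s hg
  · rw [tsum_eq_zero_of_not_summable hf]
    exact tsum_nonneg hg

theorem exp_neg_rpow_le_inv_of_log_rpow_le {a x y : ℝ} (ha : 0 < a) (hy : 1 ≤ y)
    (hx : log y ^ (1 / a) ≤ x) : exp (-x ^ a) ≤ y⁻¹ := by
  have hlog : 0 ≤ log y := log_nonneg hy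
  have hlog_le : log y ≤ x ^ a := by
    rwa [one_div, rpow_inv_le_iff_of_pos hlog ((rpow_nonneg hlog _).trans hx) ha] at hx
  calc exp (-x ^ a) ≤ exp (-log y) := exp_le_exp.mpr (neg_le_neg hlog_le)
    _ = y⁻¹ := by rw [exp_neg, exp_log (by linarith)]

theorem natCeil_le_one_add_inv_mul {κ L : ℝ} (hκ : 0 < κ) (hκL : κ ≤ L) :
    (⌈L⌉₊ : ℝ) ≤ (1 + κ⁻¹) * L := by
  have h1 : 1 ≤ κ⁻¹ * L := by rwa [← div_eq_inv_mul, one_le_div hκ]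
  linarith [Nat.ceil_lt_add_one (hκ.le.trans hκL)]

theorem tsum_tail_le_div_mul_of_exp_decay {a cE r y : ℝ} {m : ℕ} {lam b : ℕ → ℝ} (ha : 0 < a)
    (hcE : 0 ≤ cE) (hr : 0 ≤ r) (hy : 1 ≤ y) (hm : log y ^ (1 / a) ≤ m)
    (hup : ∀ j : ℕ, 1 ≤ j → lam j ≤ cE * exp (-(j : ℝ) ^ a))
    (hb : Summable fun j : ℕ => (j : ℝ) ^ r * b j ^ 2) :
    ∑' j : {j : ℕ // m < j}, lam j * b j ^ 2 ≤ cE / y * ∑' j : ℕ, (j : ℝ) ^ r * b j ^ 2 := by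
  have hcy : 0 ≤ cE / y := div_nonneg hcE (by linarith)
  rw [← tsum_mul_left]
  refine tsum_subtype_le_tsum_of_le (f := fun j => lam j * b j ^ 2) (s := {j | m < j})
    (fun j (hj : m < j) => ?_) (fun j => mul_nonneg hcy (by positivity)) (hb.mul_left _)
  have hlam : lam j ≤ cE / y := calc
    lam j ≤ cE * exp (-(j : ℝ) ^ a) := hup j hj.pos
    _ ≤ cE * y⁻¹ := by
      gcongr
      exact exp_neg_rpow_le_inv_of_log_rpow_le ha hy (hm.trans (by exact_mod_cast hj.le))
  have hb2 : b j ^ 2 ≤ (j : ℝ) ^ r * b j ^ 2 :=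
    le_mul_of_one_le_left (sq_nonneg _) (one_le_rpow (by exact_mod_cast hj.pos) hr)
  calc lam j * b j ^ 2 ≤ cE / y * b j ^ 2 := by gcongr
    _ ≤ cE / y * ((j : ℝ) ^ r * b j ^ 2) := by gcongr

theorem bias_variance_rate_exponential_general
    (a cE r R σ2 : ℝ) (ha : 0 < a) (hcE : 1 ≤ cE) (hr : 0 < r)
    (hσ : 0 < σ2)
    (lam : ℕ → ℝ)
    (hup : ∀ j : ℕ, 1 ≤ j → lam j ≤ cE * Real.exp (-(j : ℝ) ^ a)) :
    ∃ C : ℝ, 0 < C ∧ ∀ n : ℕ, 2 ≤ n → ∀ b : ℕ → ℝ,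
      (Summable fun j : ℕ => (j : ℝ) ^ r * (b j) ^ 2) →
      (∑' j : ℕ, (j : ℝ) ^ r * (b j) ^ 2 ≤ R ^ 2) →
      (∑' j : {j : ℕ // ⌈(Real.log n) ^ (1 / a)⌉₊ < j}, lam j * (b j) ^ 2)
          + σ2 * (⌈(Real.log n) ^ (1 / a)⌉₊ : ℝ) / n
        ≤ C * (n : ℝ)⁻¹ * (Real.log n) ^ (1 / a) := by
  set κ := log 2 ^ (1 / a)
  have hκ : 0 < κ := rpow_pos_of_pos (log_pos one_lt_two) _
  refine ⟨cE * R ^ 2 / κ + σ2 * (1 + κ⁻¹), by positivity, fun n hn b hb hbR => ?_⟩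
  have hn2 : (2 : ℝ) ≤ n := by exact_mod_cast hn
  set L := log n ^ (1 / a)
  have hκL : κ ≤ L := rpow_le_rpow (log_nonneg one_le_two) (log_le_log two_pos hn2) (by positivity)
  have hbias := tsum_tail_le_div_mul_of_exp_decay ha (by linarith) hr.le (by linarith) (Nat.le_ceil L) hup hb
  have hbias' : cE / n * ∑' j : ℕ, (j : ℝ) ^ r * b j ^ 2 ≤ cE * R ^ 2 / κ * (n : ℝ)⁻¹ * L := calc
    _ ≤ cE / n * R ^ 2 := by gcongr
    _ = cE * R ^ 2 / κ * (n : ℝ)⁻¹ * κ := by field_simp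
    _ ≤ cE * R ^ 2 / κ * (n : ℝ)⁻¹ * L := by gcongr
  have hvar : σ2 * (⌈L⌉₊ : ℝ) / n ≤ σ2 * (1 + κ⁻¹) * (n : ℝ)⁻¹ * L := calc
    _ ≤ σ2 * ((1 + κ⁻¹) * L) / n := by gcongr; exact natCeil_le_one_add_inv_mul hκ hκL
    _ = σ2 * (1 + κ⁻¹) * (n : ℝ)⁻¹ * L := by ring
  linarith

/-- Exponential eigenvalue decay: with `m_n* ≍ (ln n)^{1/a}`, the bias plus variance
term satisfies `∑_{j>m_n*} λ_j⟨β,ψ_j⟩² + σ²m_n*/n ≤ C n⁻¹(ln n)^{1/a}` uniformly over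
the ellipsoid `W_r^R`. -/
theorem bias_variance_rate_exponential
    (a cE r R σ2 : ℝ) (ha : 0 < a) (hcE : 1 ≤ cE) (hr : 0 < r) (hR : 0 < R)
    (hσ : 0 < σ2)
    (lam : ℕ → ℝ)
    (hlow : ∀ j : ℕ, 1 ≤ j → cE⁻¹ * Real.exp (-(j : ℝ) ^ a) ≤ lam j)
    (hup : ∀ j : ℕ, 1 ≤ j → lam j ≤ cE * Real.exp (-(j : ℝ) ^ a)) :
    ∃ C : ℝ, 0 < C ∧ ∀ n : ℕ, 2 ≤ n → ∀ b : ℕ → ℝ,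
      (Summable fun j : ℕ => (j : ℝ) ^ r * (b j) ^ 2) →
      (∑' j : ℕ, (j : ℝ) ^ r * (b j) ^ 2 ≤ R ^ 2) →
      (∑' j : {j : ℕ // ⌈(Real.log n) ^ (1 / a)⌉₊ < j}, lam j * (b j) ^ 2)
          + σ2 * (⌈(Real.log n) ^ (1 / a)⌉₊ : ℝ) / n
        ≤ C * (n : ℝ)⁻¹ * (Real.log n) ^ (1 / a) :=
  bias_variance_rate_exponential_general a cE r R σ2 ha hcE hr hσ lam hup
end
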